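/- arXiv:1604.02169 — 3 statements merged into one kernel-verified Lean document; each statement's English description precedes it below -/
import Mathlib

section
/- Let 0 < α ≤ 1, h > 0, and let f₊, f₋ : ℝ → ℝ be functions that are nonnegative on [0,∞). Suppose the sequence (x_n)_{n≥0} satisfies x_0 ≥ 0 and for all n ≥ 1 the implicit recursion x_n (1 + h^α f₋(x_{n-1})) = h^α f₊(x_{n-1}) + x_0 ∑_{k=0}^{n-1} α_k^{[α]} − ∑_{k=1}^{n-1} α_k^{[α]} x_{n-k}. Then x_n ≥ 0 for all n ≥ 0, unconditionally in h. -/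
/-!
All Grünwald–Letnikov coefficients past the first are nonpositive, and their partial sums are
nonnegative because `α · ∑_{k<n} α_k = -n α_n`. Hence, if `x_0, …, x_{n-1} ≥ 0`, every term on the
right-hand side of the recursion is nonnegative, while the factor `1 + h^α f₋(x_{n-1})` on the left
is positive; strong induction gives `x_n ≥ 0`.
-/

noncomputable def glCoef (α : ℝ) (k : ℕ) : ℝ :=
  ∏ j ∈ Finset.range k, ((j : ℝ) - α) / ((j : ℝ) + 1)

section

variable {α : ℝ}

theorem glCoef_succ (α : ℝ) (k : ℕ) : glCoef α (k + 1) = glCoef α k * ((k - α) / (k + 1)) :=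
  Finset.prod_range_succ _ _

theorem succ_mul_glCoef_succ (α : ℝ) (k : ℕ) :
    ((k : ℝ) + 1) * glCoef α (k + 1) = (k - α) * glCoef α k := by
  rw [glCoef_succ]
  field_simp

theorem glCoef_succ_nonpos (hα0 : 0 ≤ α) (hα1 : α ≤ 1) (k : ℕ) : glCoef α (k + 1) ≤ 0 := by
  rw [glCoef, Finset.prod_range_succ']
  refine mul_nonpos_of_nonneg_of_nonpos (Finset.prod_nonneg fun j _ => ?_) ?_
  · have : (0 : ℝ) ≤ j := j.cast_nonneg
    push_cast
    exact div_nonneg (by linarith) (by positivity)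
  · simp [hα0]

theorem mul_sum_range_glCoef (α : ℝ) (n : ℕ) :
    α * ∑ k ∈ Finset.range n, glCoef α k = -(n * glCoef α n) := by
  induction n with
  | zero => simp
  | succ n ih =>
    rw [Finset.sum_range_succ, mul_add, ih]
    push_cast
    linarith [succ_mul_glCoef_succ α n]

theorem sum_range_glCoef_nonneg (hα0 : 0 < α) (hα1 : α ≤ 1) (n : ℕ) :
    0 ≤ ∑ k ∈ Finset.range n, glCoef α k := by
  refine nonneg_of_mul_nonneg_right ?_ hα0
  rw [mul_sum_range_glCoef]
  cases n with
  | zero => simp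
  | succ n =>
    have := mul_nonneg (n + 1).cast_nonneg (neg_nonneg.2 (glCoef_succ_nonpos hα0.le hα1 n))
    simpa using this

theorem sum_Icc_glCoef_mul_nonpos (hα0 : 0 ≤ α) (hα1 : α ≤ 1) {n : ℕ} {y : ℕ → ℝ}
    (hy : ∀ k ∈ Finset.Icc 1 n, 0 ≤ y k) : ∑ k ∈ Finset.Icc 1 n, glCoef α k * y k ≤ 0 := by
  refine Finset.sum_nonpos fun k hk => mul_nonpos_of_nonpos_of_nonneg ?_ (hy k hk)
  obtain ⟨j, rfl⟩ := Nat.exists_eq_add_of_le' (Finset.mem_Icc.1 hk).1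
  exact glCoef_succ_nonpos hα0 hα1 j

end

/-- Unconditional positivity of the NSFD scheme for `D^α x = f₊(x) - x f₋(x)`. -/
theorem nsfd_positivity (α h : ℝ) (hα0 : 0 < α) (hα1 : α ≤ 1) (hh : 0 < h)
    (fp fm : ℝ → ℝ) (hfp : ∀ z, 0 ≤ z → 0 ≤ fp z) (hfm : ∀ z, 0 ≤ z → 0 ≤ fm z)
    (x : ℕ → ℝ) (hx0 : 0 ≤ x 0)
    (hrec : ∀ n : ℕ, 1 ≤ n →
      x n * (1 + h ^ α * fm (x (n - 1))) =
        h ^ α * fp (x (n - 1)) + x 0 * (∑ k ∈ Finset.range n, glCoef α k)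
          - ∑ k ∈ Finset.Icc 1 (n - 1), glCoef α k * x (n - k)) :
    ∀ n, 0 ≤ x n := by
  have hhα : 0 ≤ h ^ α := Real.rpow_nonneg hh.le α
  intro n
  induction n using Nat.strong_induction_on with
  | _ n ih =>
    rcases n with _ | m
    · exact hx0
    have hxm : 0 ≤ x m := ih m m.lt_succ_self
    have hsource : 0 ≤ h ^ α * fp (x m) := mul_nonneg hhα (hfp _ hxm)
    have hinitial : 0 ≤ x 0 * ∑ k ∈ Finset.range (m + 1), glCoef α k :=
      mul_nonneg hx0 (sum_range_glCoef_nonneg hα0 hα1 _)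
    have hmemory : ∑ k ∈ Finset.Icc 1 m, glCoef α k * x (m + 1 - k) ≤ 0 :=
      sum_Icc_glCoef_mul_nonpos hα0.le hα1 fun k hk => ih _ (by grind)
    have hstep := hrec (m + 1) (Nat.le_add_left 1 m)
    simp only [Nat.add_sub_cancel] at hstep
    exact nonneg_of_mul_nonneg_left (by rw [hstep]; linarith)
      (add_pos_of_pos_of_nonneg one_pos (mul_nonneg hhα (hfm _ hxm)))
end

section
/- Let f : ℝ^m → ℝ^m be C¹ and satisfy the positivity condition (P)₁: for each i, f_i(x) ≥ 0 whenever x ∈ ℝ₊^m and x_i = 0. Then for each i there exist functions f_{+,i}, f_{-,i} : ℝ^m → ℝ, nonnegative on ℝ₊^m and locally Lipschitz, such that f_i(x) = f_{+,i}(x) − x_i f_{-,i}(x) for all x. -/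
/-!
Instead of splitting the Hadamard integral, take `f₋(x) = Φ(‖x‖)` for a locally Lipschitz
`Φ` dominating `‖Df‖` on balls, and `f₊ = fᵢ + xᵢ f₋`. On the orthant, the mean value
inequality between `x` and `x` with its `i`-th coordinate zeroed gives
`fᵢ(x) ≥ fᵢ(x with xᵢ = 0) - xᵢ Φ(‖x‖) ≥ -xᵢ Φ(‖x‖)` by `(P)₁`, so `f₊ ≥ 0`.
The supremum `M(r)` of `‖Df‖` on the ball of radius `r` is monotone but need not be
Lipschitz; its average `Φ(r) = ∫_r^{r+1} M` still dominates it and is locally Lipschitz.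
-/

open Metric Set MeasureTheory

lemma LocallyLipschitz.smul {α 𝕜 E : Type*} [PseudoMetricSpace α] [RCLike 𝕜]
    [NormedAddCommGroup E] [NormedSpace 𝕜 E] {f : α → 𝕜} {g : α → E}
    (hf : LocallyLipschitz f) (hg : LocallyLipschitz g) :
    LocallyLipschitz fun x ↦ f x • g x :=
  (contDiff_smul (𝕜 := 𝕜)).locallyLipschitz.comp (hf.prodMk hg)

namespace Monotone

variable {M : ℝ → ℝ}

lemma lipschitzOnWith_integral_Icc (hM : Monotone M) (c a b : ℝ) :
    LipschitzOnWith (max |M a| |M b|).toNNReal (fun t ↦ ∫ s in c..t, M s) (Icc a b) := by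
  have hint (a b : ℝ) : IntervalIntegrable M volume a b := hM.intervalIntegrable
  refine LipschitzOnWith.of_dist_le' fun t ht u hu ↦ ?_
  rw [Real.dist_eq, intervalIntegral.integral_interval_sub_left (hint c t) (hint c u),
    Real.dist_eq, ← Real.norm_eq_abs]
  refine intervalIntegral.norm_integral_le_of_norm_le_const fun s hs ↦ ?_
  have hs' : s ∈ Icc a b := uIcc_subset_Icc hu ht (uIoc_subset_uIcc hs)
  exact abs_le_max_abs_abs (hM hs'.1) (hM hs'.2)

lemma locallyLipschitz_integral (hM : Monotone M) (c : ℝ) :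
    LocallyLipschitz fun t ↦ ∫ s in c..t, M s :=
  fun t ↦ ⟨_, Icc (t - 1) (t + 1), Icc_mem_nhds (by linarith) (by linarith),
    hM.lipschitzOnWith_integral_Icc c _ _⟩

lemma locallyLipschitz_integral_unitInterval (hM : Monotone M) :
    LocallyLipschitz fun r ↦ ∫ s in r..r + 1, M s := by
  have hshift : LocallyLipschitz fun r : ℝ ↦ r + 1 := .add .id (.const 1)
  have hsplit : (fun r ↦ ∫ s in r..r + 1, M s) =
      fun r ↦ (∫ s in 0..r + 1, M s) - ∫ s in 0..r, M s := funext fun r ↦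
    (intervalIntegral.integral_interval_sub_left hM.intervalIntegrable hM.intervalIntegrable).symm
  rw [hsplit]
  exact ((hM.locallyLipschitz_integral 0).comp hshift).sub (hM.locallyLipschitz_integral 0)

lemma le_integral_unitInterval (hM : Monotone M) (r : ℝ) : M r ≤ ∫ s in r..r + 1, M s := by
  simpa using intervalIntegral.integral_mono_on (by linarith : r ≤ r + 1) intervalIntegrable_const
    (hM.intervalIntegrable (μ := volume)) fun s hs ↦ hM hs.1

end Monotone

section RadialMajorant

variable {E : Type*} [NormedAddCommGroup E] [ProperSpace E] {n : E → ℝ}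

-- Radius `max r 0` keeps the ball nonempty, avoiding the junk value `sSup ∅ = 0`.
noncomputable def radialSup (n : E → ℝ) (r : ℝ) : ℝ := sSup (n '' closedBall 0 (max r 0))

lemma le_radialSup (hn : Continuous n) {y : E} {r : ℝ} (hy : ‖y‖ ≤ max r 0) :
    n y ≤ radialSup n r :=
  le_csSup ((isCompact_closedBall 0 _).image hn).bddAbove ⟨y, mem_closedBall_zero_iff.2 hy, rfl⟩

lemma monotone_radialSup (hn : Continuous n) : Monotone (radialSup n) := fun _ _ hrs ↦
  csSup_le_csSup ((isCompact_closedBall 0 _).image hn).bddAbove ⟨n 0, 0, by simp, rfl⟩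
    (image_mono (closedBall_subset_closedBall (max_le_max hrs le_rfl)))

theorem exists_locallyLipschitz_radial_majorant (hn : Continuous n) :
    ∃ Φ : ℝ → ℝ, LocallyLipschitz Φ ∧ ∀ y r, ‖y‖ ≤ r → n y ≤ Φ r :=
  ⟨fun r ↦ ∫ s in r..r + 1, radialSup n s,
    (monotone_radialSup hn).locallyLipschitz_integral_unitInterval,
    fun _ r hy ↦ (le_radialSup hn (le_max_of_le_left hy)).trans
      ((monotone_radialSup hn).le_integral_unitInterval r)⟩

end RadialMajorant

section Orthant

variable {ι : Type*} [Fintype ι] [DecidableEq ι]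

lemma norm_update_zero_le {G : Type*} [SeminormedAddCommGroup G] (x : ι → G) (i : ι) :
    ‖Function.update x i 0‖ ≤ ‖x‖ := by
  refine (pi_norm_le_iff_of_nonneg (norm_nonneg x)).2 fun j ↦ ?_
  rcases eq_or_ne j i with rfl | hj
  · simp
  · simpa [hj] using norm_le_pi_norm x j

lemma neg_mul_le_apply_of_norm_fderiv_le {f : (ι → ℝ) → ι → ℝ} {i : ι}
    (hf : Differentiable ℝ f) (hP : ∀ x : ι → ℝ, (∀ j, 0 ≤ x j) → x i = 0 → 0 ≤ f x i)
    {x : ι → ℝ} (hx : ∀ j, 0 ≤ x j) {C : ℝ} (hC : ∀ y, ‖y‖ ≤ ‖x‖ → ‖fderiv ℝ f y‖ ≤ C) :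
    -(C * x i) ≤ f x i := by
  set x' := Function.update x i 0
  have hx' : 0 ≤ f x' i := hP x' (fun j ↦ by
    rcases eq_or_ne j i with rfl | hj
    · simp [x']
    · simp [x', hj, hx j]) (by simp [x'])
  have hmvt : ‖f x - f x'‖ ≤ C * ‖x - x'‖ :=
    (convex_closedBall 0 ‖x‖).norm_image_sub_le_of_norm_fderiv_le (fun y _ ↦ hf y)
      (fun y hy ↦ hC y (mem_closedBall_zero_iff.1 hy))
      (mem_closedBall_zero_iff.2 (norm_update_zero_le x i)) (mem_closedBall_zero_iff.2 le_rfl)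
  have hdist : ‖x - x'‖ = x i := by
    simp [x', Pi.update_eq_sub_add_single, Pi.norm_single, abs_of_nonneg (hx i)]
  have hcomp : |f x i - f x' i| ≤ ‖f x - f x'‖ := norm_le_pi_norm (f x - f x') i
  rw [hdist] at hmvt
  linarith [abs_le.1 (hcomp.trans hmvt)]

end Orthant

/-- Representation theorem: a `C¹` vector field satisfying the positivity condition `(P)₁`
decomposes as `f_i(x) = f_{+,i}(x) - x_i f_{-,i}(x)` with `f_±` nonnegative on the
nonnegative orthant and locally Lipschitz. -/
theorem representation_theorem (m : ℕ) (f : (Fin m → ℝ) → (Fin m → ℝ))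
    (hf : ContDiff ℝ 1 f)
    (hP : ∀ i : Fin m, ∀ x : Fin m → ℝ, (∀ j, 0 ≤ x j) → x i = 0 → 0 ≤ f x i) :
    ∀ i : Fin m, ∃ fp fm : (Fin m → ℝ) → ℝ,
      LocallyLipschitz fp ∧ LocallyLipschitz fm ∧
      (∀ x : Fin m → ℝ, (∀ j, 0 ≤ x j) → 0 ≤ fp x ∧ 0 ≤ fm x) ∧
      (∀ x : Fin m → ℝ, f x i = fp x - x i * fm x) := by
  intro i
  obtain ⟨Φ, hΦ, hΦ_ge⟩ :=
    exists_locallyLipschitz_radial_majorant (hf.continuous_fderiv one_ne_zero).norm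
  have hcoord : LocallyLipschitz fun x : Fin m → ℝ ↦ x i := (LipschitzWith.eval i).locallyLipschitz
  have hfm : LocallyLipschitz fun x : Fin m → ℝ ↦ Φ ‖x‖ :=
    hΦ.comp lipschitzWith_one_norm.locallyLipschitz
  refine ⟨fun x ↦ f x i + x i * Φ ‖x‖, fun x ↦ Φ ‖x‖,
    (hcoord.comp hf.locallyLipschitz).add (hcoord.smul hfm), hfm, fun x hx ↦ ?_, fun x ↦ by ring⟩
  have hΦ_nonneg : 0 ≤ Φ ‖x‖ := (norm_nonneg _).trans (hΦ_ge 0 ‖x‖ (by simp))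
  have hbound := neg_mul_le_apply_of_norm_fderiv_le (hf.differentiable one_ne_zero) (hP i) hx
    fun y hy ↦ hΦ_ge y ‖x‖ hy
  exact ⟨by linarith, hΦ_nonneg⟩
end

section
/- Let 0 < α ≤ 1, h > 0, and suppose (x_n, y_n) is generated by the NSFD scheme for the predator–prey model: x_n = K u_{n-1}[h^α s x_{n-1} − ∑_{j=1}^n α_j^{[α]} x_{n-j} + x_0 α_n^{[α-1]}] / (K u_{n-1} + h^α (s u_{n-1} x_{n-1} + q K y_{n-1})) and y_n = [h^α β x_{n-1} y_{n-1} − u_{n-1} ∑_{j=1}^n α_j^{[α]} y_{n-j} + u_{n-1} y_0 α_n^{[α-1]}] / ((1 + h^α(s₀+E)) u_{n-1}), where u_n = 1 + q₁ x_n. If x_0 ≥ 0 and y_0 ≥ 0, then x_n ≥ 0 and y_n ≥ 0 for all n, for every h > 0. -/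
/-! The Grünwald–Letnikov weights `glCoef α j = α_j^{[α]}`, `j ≥ 1`, are nonpositive for `0 < α ≤ 1`, so the
memory term `-∑ glCoef α j z (n - j)` of both updates is a nonnegative combination of earlier
values, and `glCoef (α - 1) n ≥ 0`. Hence, by strong induction, each update is a quotient of a
nonnegative numerator by a nonnegative denominator, whatever the step size `h`. -/

open Finset

theorem glCoef_nonpos {α : ℝ} (hα0 : 0 < α) (hα1 : α ≤ 1) {j : ℕ} (hj : 1 ≤ j) :
    glCoef α j ≤ 0 := by
  obtain ⟨m, rfl⟩ := Nat.exists_eq_add_of_le hj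
  rw [glCoef, add_comm, prod_range_succ']
  refine mul_nonpos_of_nonneg_of_nonpos (prod_nonneg fun k _ => div_nonneg ?_ (by positivity)) ?_
  · push_cast
    linarith [(k.cast_nonneg : (0 : ℝ) ≤ k)]
  · simp only [Nat.cast_zero, zero_sub, zero_add, div_one]
    linarith

theorem glCoef_sub_one_nonneg {α : ℝ} (hα1 : α ≤ 1) (n : ℕ) : 0 ≤ glCoef (α - 1) n :=
  prod_nonneg fun k _ => div_nonneg (by linarith [(k.cast_nonneg : (0 : ℝ) ≤ k)]) (by positivity)

theorem sum_glCoef_mul_le {α : ℝ} (hα0 : 0 < α) (hα1 : α ≤ 1) {z : ℕ → ℝ} {n : ℕ}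
    (hz : ∀ m < n, 0 ≤ z m) (hz0 : 0 ≤ z 0) :
    ∑ j ∈ Icc 1 n, glCoef α j * z (n - j) ≤ z 0 * glCoef (α - 1) n := by
  have hsum : ∑ j ∈ Icc 1 n, glCoef α j * z (n - j) ≤ 0 := by
    refine sum_nonpos fun j hj => ?_
    obtain ⟨hj1, hjn⟩ := mem_Icc.mp hj
    exact mul_nonpos_of_nonpos_of_nonneg (glCoef_nonpos hα0 hα1 hj1) (hz _ (by omega))
  exact hsum.trans (mul_nonneg hz0 (glCoef_sub_one_nonneg hα1 n))

/-- The NSFD scheme for the fractional predator–prey model preserves positivity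
unconditionally in the step size `h`.  Here `u n = 1 + q₁ x n` and
`glCoef (α-1) n = α_n^{[α-1]}`. -/
theorem nsfd_predator_prey_positivity (α h s K q q₁ β s₀ E : ℝ)
    (hα0 : 0 < α) (hα1 : α ≤ 1) (hh : 0 < h)
    (hs : 0 < s) (hK : 0 < K) (hq : 0 < q) (hq₁ : 0 < q₁) (hβ : 0 < β)
    (hs₀ : 0 < s₀) (hE : 0 < E)
    (x y : ℕ → ℝ) (u : ℕ → ℝ) (hu : ∀ n, u n = 1 + q₁ * x n)
    (hx0 : 0 ≤ x 0) (hy0 : 0 ≤ y 0)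
    (hxrec : ∀ n : ℕ, 1 ≤ n →
      x n = K * u (n - 1) *
          (h ^ α * s * x (n - 1) - (∑ j ∈ Finset.Icc 1 n, glCoef α j * x (n - j))
            + x 0 * glCoef (α - 1) n) /
        (K * u (n - 1) + h ^ α * (s * u (n - 1) * x (n - 1) + q * K * y (n - 1))))
    (hyrec : ∀ n : ℕ, 1 ≤ n →
      y n = (h ^ α * β * x (n - 1) * y (n - 1)
            - u (n - 1) * (∑ j ∈ Finset.Icc 1 n, glCoef α j * y (n - j))
            + u (n - 1) * y 0 * glCoef (α - 1) n) /
        ((1 + h ^ α * (s₀ + E)) * u (n - 1))) :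
    ∀ n, 0 ≤ x n ∧ 0 ≤ y n := by
  intro n
  induction n using Nat.strong_induction_on with
  | _ n ih =>
    rcases n with _ | n
    · exact ⟨hx0, hy0⟩
    obtain ⟨hxn, hyn⟩ := ih n n.lt_succ_self
    have hun : 0 ≤ u n := by rw [hu]; positivity
    have hhα : 0 ≤ h ^ α := Real.rpow_nonneg hh.le α
    have hmx := sub_nonneg.mpr (sum_glCoef_mul_le hα0 hα1 (fun m hm => (ih m hm).1) hx0)
    have hmy := sub_nonneg.mpr (sum_glCoef_mul_le hα0 hα1 (fun m hm => (ih m hm).2) hy0)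
    rw [hxrec _ n.succ_pos, hyrec _ n.succ_pos, Nat.succ_sub_one]
    -- isolate the memory terms, whose signs `positivity` then reads off `hmx` and `hmy`
    constructor
    · rw [sub_add_eq_add_sub, add_sub_assoc]
      positivity
    · rw [sub_add_eq_add_sub, add_sub_assoc, mul_assoc (u n), ← mul_sub]
      positivity
end
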